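/- For every nonempty critical RVT code word W, the leading entry λ₀ of PC(W) is at least 2, and λ₀ = 2 if and only if W has the form R^{ρ} V for some ρ ≥ 1 (possibly followed by trailing R's after normalization). -/

import Mathlib

/-- The three symbols of an RVT code word. -/
inductive RVT : Type
  | R | V | T
deriving DecidableEq, Repr

/-- Replace a leading run of `T`'s by `R`'s. -/
def deT : List RVT → List RVT
  | RVT.T :: xs => RVT.R :: deT xs
  | xs => xs

/-- If the word begins with `V`, replace that `V` and the immediately
following `T`'s by `R`'s. -/
def reg : List RVT → List RVT
  | RVT.V :: xs => RVT.R :: deT xs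
  | xs => xs

/-- The lifted word `L(W)`: remove the first symbol (an `R`), then replace a
leading maximal critical block `V Tᵗ` by `R^(t+1)`. -/
def lift (w : List RVT) : List RVT := reg w.tail

/-- Length of the leading run of `T`'s. -/
def countT : List RVT → ℕ
  | RVT.T :: xs => countT xs + 1
  | _ => 0

/-- Fueled version of the front-end recursion for the Puiseux characteristic
(Theorem PCfront): base case `[1]` on all-`R` words; given
`PC(L(W)) = [l0; l1, ..., lg]`,
(A) if `W` begins `RR` then `PC(W) = [l0; l1+l0, ..., lg+l0]`;
(B) if `W` begins `R V T^t R` or `W = R V T^t` then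
`PC(W) = [(t+2)l0; (t+3)l0, l1+l0, ..., lg+l0]`;
(C) if `W` begins `R V T^t V` then `PC(W) = [l1; l1+l0, ..., lg+l0]`. -/
def PCf : ℕ → List RVT → List ℕ
  | 0, _ => [1]
  | _ + 1, [] => [1]
  | fuel + 1, w@(_ :: rest) =>
    if w.all (· = RVT.R) then [1]
    else
      let p := PCf fuel (lift w)
      let l0 := p.headD 1
      let tl := p.tail
      match rest with
      | RVT.V :: xs =>
        match xs.drop (countT xs) with
        | RVT.V :: _ => tl.headD 1 :: tl.map (· + l0)                                -- case (C)
        | _ => ((countT xs + 2) * l0) :: ((countT xs + 3) * l0) :: tl.map (· + l0)   -- case (B)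
      | _ => l0 :: tl.map (· + l0)                                                   -- case (A)

/-- The Puiseux characteristic `PC(W)` computed by the front-end recursion. -/
def PC (w : List RVT) : List ℕ := PCf w.length w

/-- A valid RVT code word: begins with `R`, and `T` occurs only immediately
after a `V` or a `T`. -/
def ValidRVT (w : List RVT) : Prop :=
  w.head? = some RVT.R ∧
  ∀ i, w[i + 1]? = some RVT.T → (w[i]? = some RVT.V ∨ w[i]? = some RVT.T)

/-- The function `E` on strings, with `E_T[a;b] = [a;a+b]`, `E_V[a;b] = [b;a+b]`,
`E_R = E_T`, and base value `E(empty) = [1;2]`; the leftmost symbol acts last. -/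
def Efun : List RVT → ℕ × ℕ
  | [] => (1, 2)
  | RVT.V :: q => ((Efun q).2, (Efun q).1 + (Efun q).2)
  | _ :: q => ((Efun q).1, (Efun q).1 + (Efun q).2)

/-- The Euclidean-type recursion: `Euc(1,2)` is the empty word; for coprime
`a < b`, if `b < 2a` then `Euc(a,b) = V · Euc(b-a,a)`, and if `b > 2a` then
`Euc(a,b) = T · Euc(a,b-a)`. -/
def Euc (a b : ℕ) : List RVT :=
  if a = 1 ∧ b = 2 then []
  else if _h1 : 0 < a ∧ a < b ∧ b < 2 * a then RVT.V :: Euc (b - a) a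
  else if _h2 : 0 < a ∧ a < b ∧ 2 * a < b then RVT.T :: Euc a (b - a)
  else []
termination_by a + b
decreasing_by all_goals omega

/-! A critical word `W = R c xs` is reduced to its lift `L(W)`, which is again a valid word,
one letter shorter. By induction, `PC(L(W)) = [l₀; l₁, …]` with `2 ≤ l₀ < l₁` unless `L(W)`
consists of `R`'s only. Case (A) keeps the lead `l₀` and `L(R R xs) = R xs` is of the form
`R^ρ V R^k` exactly when `R R xs` is. Case (B) multiplies the lead by `t + 2`, which gives `2`
only when `t = 0` and `L(W)` is all `R`, i.e. `W = R V R^k`. Case (C) promotes `l₁ > l₀ ≥ 2`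
to the lead, and such `W` contain a second `V`. -/

open RVT

def TOnlyAfterVOrT (l : List RVT) : Prop :=
  ∀ i, l[i + 1]? = some T → (l[i]? = some V ∨ l[i]? = some T)

theorem head?_deT_ne_T : ∀ l : List RVT, (deT l).head? ≠ some T
  | [] | R :: _ | V :: _ | T :: _ => by simp [deT]

namespace TOnlyAfterVOrT

theorem tail {x : RVT} {l : List RVT} (h : TOnlyAfterVOrT (x :: l)) : TOnlyAfterVOrT l :=
  fun i hi => by simpa using h (i + 1) (by simpa using hi)

theorem cons_R {l : List RVT} (h0 : l.head? ≠ some T) (h : TOnlyAfterVOrT l) :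
    TOnlyAfterVOrT (R :: l) := by
  rintro (_ | i) hi
  · cases l <;> simp_all
  · simpa using h i (by simpa using hi)

theorem deT : ∀ {l : List RVT}, TOnlyAfterVOrT l → TOnlyAfterVOrT (deT l)
  | [], h => h
  | R :: _, h => h
  | V :: _, h => h
  | T :: xs, h => cons_R (head?_deT_ne_T xs) (deT h.tail)

end TOnlyAfterVOrT

theorem length_deT : ∀ l : List RVT, (deT l).length = l.length
  | [] => rfl
  | R :: _ => rfl
  | V :: _ => rfl
  | T :: xs => by simp [deT, length_deT xs]

theorem deT_eq_replicate_append_drop : ∀ l : List RVT,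
    deT l = List.replicate (countT l) R ++ l.drop (countT l)
  | [] => rfl
  | R :: _ => rfl
  | V :: _ => rfl
  | T :: xs => by
    simp [deT, countT, deT_eq_replicate_append_drop xs, List.replicate_succ]

theorem countT_eq_zero_of_all_R {l : List RVT} (h : l.all (· = R)) : countT l = 0 := by
  cases l with
  | nil => rfl
  | cons c _ => cases c <;> simp_all [countT]

theorem deT_of_countT_eq_zero {l : List RVT} (h : countT l = 0) : deT l = l := by
  simpa [h] using deT_eq_replicate_append_drop l

theorem ValidRVT.of_R_R {xs : List RVT} (h : ValidRVT (R :: R :: xs)) :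
    ValidRVT (R :: xs) :=
  ⟨rfl, TOnlyAfterVOrT.tail h.2⟩

theorem ValidRVT.lift_R_V {xs : List RVT} (h : ValidRVT (R :: V :: xs)) :
    ValidRVT (R :: deT xs) :=
  ⟨rfl, TOnlyAfterVOrT.cons_R (head?_deT_ne_T xs) (TOnlyAfterVOrT.tail h.2).tail.deT⟩

theorem not_validRVT_R_T (xs : List RVT) : ¬ ValidRVT (R :: T :: xs) := by
  intro h
  simpa using h.2 0 rfl

theorem PC_of_all_R {w : List RVT} (h : w.all (· = R)) : PC w = [1] := by
  unfold PC
  cases w <;> simp [PCf, h]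

theorem PC_R_R {xs : List RVT} (h : ¬ (R :: R :: xs).all (· = R)) :
    PC (R :: R :: xs) =
      (PC (R :: xs)).headD 1 :: (PC (R :: xs)).tail.map (· + (PC (R :: xs)).headD 1) := by
  simp only [PC, List.length_cons]
  rw [PCf]
  simp [h, lift, reg]

theorem PC_R_V_of_drop_countT_eq_V {xs ys : List RVT} (hV : xs.drop (countT xs) = V :: ys) :
    PC (R :: V :: xs) =
      (PC (R :: deT xs)).tail.headD 1 ::
        (PC (R :: deT xs)).tail.map (· + (PC (R :: deT xs)).headD 1) := by
  simp only [PC, List.length_cons, length_deT]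
  rw [PCf]
  simp [lift, reg, hV]

theorem PC_R_V_of_drop_countT_ne_V {xs : List RVT} (hV : ∀ ys, xs.drop (countT xs) ≠ V :: ys) :
    PC (R :: V :: xs) =
      (countT xs + 2) * (PC (R :: deT xs)).headD 1 ::
        (countT xs + 3) * (PC (R :: deT xs)).headD 1 ::
          (PC (R :: deT xs)).tail.map (· + (PC (R :: deT xs)).headD 1) := by
  simp only [PC, List.length_cons, length_deT]
  rw [PCf]
  rcases hd : xs.drop (countT xs) with _ | ⟨_ | _ | _, ys⟩
  · simp [lift, reg, hd]
  · simp [lift, reg, hd]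
  · exact absurd hd (hV ys)
  · simp [lift, reg, hd]

def IsRPowV (w : List RVT) : Prop :=
  ∃ ρ k, 1 ≤ ρ ∧ w = List.replicate ρ R ++ V :: List.replicate k R

theorem isRPowV_R_R_iff {xs : List RVT} : IsRPowV (R :: R :: xs) ↔ IsRPowV (R :: xs) := by
  constructor
  · rintro ⟨_ | _ | ρ, k, hρ, h⟩
    · omega
    · simp at h
    · exact ⟨ρ + 1, k, by omega, by simpa [List.replicate_succ] using h⟩
  · rintro ⟨ρ, k, -, h⟩
    exact ⟨ρ + 1, k, by omega, by simp [List.replicate_succ, h]⟩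

theorem isRPowV_R_V_iff {xs : List RVT} : IsRPowV (R :: V :: xs) ↔ xs.all (· = R) := by
  constructor
  · rintro ⟨_ | _ | ρ, k, hρ, h⟩
    · omega
    · simp_all
    · simp [List.replicate_succ] at h
  · intro h
    exact ⟨1, xs.length, le_rfl, by simpa [List.eq_replicate_length] using h⟩

/-- The invariant of the induction: `l₀ < l₁` is needed because case (C) promotes `l₁` to the
lead. -/
def CriticalLead (w : List RVT) (p : List ℕ) : Prop :=
  ∃ a b t, p = a :: b :: t ∧ 2 ≤ a ∧ a < b ∧ (a = 2 ↔ IsRPowV w)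

theorem criticalLead_R_R {xs : List RVT} (h : ¬ (R :: R :: xs).all (· = R))
    (ih : CriticalLead (R :: xs) (PC (R :: xs))) :
    CriticalLead (R :: R :: xs) (PC (R :: R :: xs)) := by
  obtain ⟨a, b, t, hp, h2a, hab, hlead⟩ := ih
  exact ⟨a, b + a, t.map (· + a), by simp [PC_R_R h, hp], h2a, by omega,
    hlead.trans isRPowV_R_R_iff.symm⟩

theorem criticalLead_R_V_of_drop_countT_eq_V {xs ys : List RVT}
    (hV : xs.drop (countT xs) = V :: ys)
    (ih : ¬ (R :: deT xs).all (· = R) →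
      CriticalLead (R :: deT xs) (PC (R :: deT xs))) :
    CriticalLead (R :: V :: xs) (PC (R :: V :: xs)) := by
  have hL : ¬ (R :: deT xs).all (· = R) := by
    simp [deT_eq_replicate_append_drop, hV]
  obtain ⟨a, b, t, hp, h2a, hab, -⟩ := ih hL
  refine ⟨b, b + a, t.map (· + a), by simp [PC_R_V_of_drop_countT_eq_V hV, hp], by omega,
    by omega, iff_of_false (by omega) fun hw => ?_⟩
  have hR := isRPowV_R_V_iff.1 hw
  rw [countT_eq_zero_of_all_R hR, List.drop_zero] at hV
  simp [hV] at hR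

theorem criticalLead_R_V_of_drop_countT_ne_V {xs : List RVT}
    (hV : ∀ ys, xs.drop (countT xs) ≠ V :: ys)
    (ih : ¬ (R :: deT xs).all (· = R) →
      CriticalLead (R :: deT xs) (PC (R :: deT xs))) :
    CriticalLead (R :: V :: xs) (PC (R :: V :: xs)) := by
  rw [PC_R_V_of_drop_countT_ne_V hV]
  by_cases hL : (R :: deT xs).all (· = R)
  · refine ⟨countT xs + 2, countT xs + 3, [], by simp [PC_of_all_R hL], by omega, by omega, ?_⟩
    rw [isRPowV_R_V_iff]
    constructor
    · intro h
      simpa [deT_of_countT_eq_zero (by omega : countT xs = 0)] using hL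
    · intro h
      simp [countT_eq_zero_of_all_R h]
  · obtain ⟨a, b, t, hp, h2a, hab, -⟩ := ih hL
    refine ⟨(countT xs + 2) * a, (countT xs + 3) * a, (b + a) :: t.map (· + a), by simp [hp],
      by nlinarith, by nlinarith, iff_of_false (by nlinarith) fun hw => hL ?_⟩
    have hR := isRPowV_R_V_iff.1 hw
    simpa [deT_of_countT_eq_zero (countT_eq_zero_of_all_R hR)] using hR

theorem criticalLead_of_validRVT : ∀ w : List RVT, ValidRVT w → ¬ w.all (· = R) →
    CriticalLead w (PC w)
  | [], hv, _ => by simp [ValidRVT] at hv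
  | V :: _, hv, _ | T :: _, hv, _ => by simp [ValidRVT] at hv
  | [R], _, hw => by simp at hw
  | R :: T :: xs, hv, _ => absurd hv (not_validRVT_R_T xs)
  | R :: R :: xs, hv, hw =>
    criticalLead_R_R hw (criticalLead_of_validRVT _ hv.of_R_R (by simpa using hw))
  | R :: V :: xs, hv, _ => by
    have ih := criticalLead_of_validRVT (R :: deT xs) hv.lift_R_V
    by_cases hV : ∃ ys, xs.drop (countT xs) = V :: ys
    · obtain ⟨ys, hV⟩ := hV
      exact criticalLead_R_V_of_drop_countT_eq_V hV ih
    · exact criticalLead_R_V_of_drop_countT_ne_V (not_exists.1 hV) ih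
termination_by w => w.length
decreasing_by all_goals simp [length_deT]

/-- For every critical RVT code word `W` (valid, and not consisting entirely
of `R`'s, so that after deleting trailing `R`'s it is nonempty and ends in `V`
or `T`), the leading entry `l0` of `PC(W)` is at least `2`, and `l0 = 2` iff
`W` has the form `R^ρ V` with `ρ ≥ 1`, possibly followed by trailing `R`'s. -/
theorem statement17 (W : List RVT) (hW : ValidRVT W)
    (hcrit : ¬ W.all (· = RVT.R)) :
    2 ≤ (PC W).headD 1 ∧
    ((PC W).headD 1 = 2 ↔
      ∃ ρ k, 1 ≤ ρ ∧
        W = List.replicate ρ RVT.R ++ RVT.V :: List.replicate k RVT.R) := by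
  obtain ⟨a, b, t, hp, h2a, -, hlead⟩ := criticalLead_of_validRVT W hW hcrit
  rw [hp]
  exact ⟨h2a, hlead⟩
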